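/- For every n ≥ 4 and every x ∈ [0,1], the central moments of the second-order modified Durrmeyer operator satisfy D̃_n^{M,2}((t − x)^2; x) = 20x(1−x)/((n+2)(n+3)) − 3/((n+2)(n+3)) and D̃_n^{M,2}((t − x)^3; x) = 3(1 − 2x)(−4nx(1−x) − 48x^2 + 48x − 7)/((n+2)(n+3)(n+4)). -/

import Mathlib

/-!
Against `t ^ j` the Durrmeyer weights become Beta integrals, so `D̃(t ^ j)` is the sum of the
rising factorials `(k + 1) ⋯ (k + j)` against `p̃_{n,k}`, divided by `(n + 2) ⋯ (n + j + 1)`.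
Each `p̃_{n,k}` combines the three shifted Bernstein bases `p_{n-2,k-s}`, `s ≤ 2`, and Bernstein
sums of falling factorials are exact: `∑ₖ p_{m,k}(x) k(k-1)⋯(k-l+1) = m(m-1)⋯(m-l+1) xˡ`.
Expanding `(t - x) ^ r` binomially and the shifted falling factorials by Vandermonde's identity
leaves a rational identity in `n` and `x`.
-/

open Filter Topology

/-- Bernstein basis polynomial `p_{n,k}(x)`, zero when `k < 0` or `k > n`. -/
noncomputable def bern (n : ℕ) (k : ℤ) (x : ℝ) : ℝ :=
  if 0 ≤ k ∧ k ≤ (n : ℤ) then (n.choose k.toNat : ℝ) * x ^ k.toNat * (1 - x) ^ (n - k.toNat)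
  else 0

/-- Second-order modified Bernstein basis `p̃_{n,k}^{M,2}(x)`. -/
noncomputable def pM2 (n : ℕ) (k : ℤ) (x : ℝ) : ℝ :=
  (((n : ℝ) - 2) * x ^ 2 - (n : ℝ) * x + 3 / 2) * bern (n - 2) k x
    + 2 * ((n : ℝ) - 2) * x * (1 - x) * bern (n - 2) (k - 1) x
    + (((n : ℝ) - 2) * x ^ 2 - ((n : ℝ) - 4) * x - 1 / 2) * bern (n - 2) (k - 2) x

/-- Second-order modified Durrmeyer operator `D̃_n^{M,2}(f;x)`. -/
noncomputable def DM2 (n : ℕ) (f : ℝ → ℝ) (x : ℝ) : ℝ :=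
  ((n : ℝ) + 1) * ∑ k ∈ Finset.range (n + 1),
    pM2 n k x * ∫ t in (0:ℝ)..1, bern n k t * f t

open Finset
open scoped Nat

lemma integral_pow_mul_one_sub_pow (a b : ℕ) :
    ∫ t in (0:ℝ)..1, t ^ a * (1 - t) ^ b = a ! * b ! / (a + b + 1)! := by
  induction b generalizing a with
  | zero =>
    simp only [pow_zero, mul_one, integral_pow, add_zero, Nat.factorial_succ]
    push_cast
    field_simp
    simp
  | succ b ih =>
    have hu (t : ℝ) : HasDerivAt (fun t => (1 - t) ^ (b + 1)) (-((b + 1) * (1 - t) ^ b)) t := by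
      simpa using ((hasDerivAt_id t).const_sub 1).fun_pow (b + 1)
    have hv (t : ℝ) : HasDerivAt (fun t : ℝ => t ^ (a + 1) / (a + 1)) (t ^ a) t := by
      have := (hasDerivAt_pow (a + 1) t).div_const (a + 1 : ℝ)
      rwa [add_tsub_cancel_right, Nat.cast_add_one, mul_div_cancel_left₀ _ (by positivity)] at this
    have ibp := intervalIntegral.integral_mul_deriv_eq_deriv_mul (a := 0) (b := 1)
      (fun t _ => hu t) (fun t _ => hv t)
      (Continuous.intervalIntegrable (by fun_prop) _ _)
      (Continuous.intervalIntegrable (by fun_prop) _ _)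
    calc ∫ t in (0:ℝ)..1, t ^ a * (1 - t) ^ (b + 1)
        = ∫ t in (0:ℝ)..1, (1 - t) ^ (b + 1) * t ^ a := by simp only [mul_comm]
      _ = (b + 1) / (a + 1) * ∫ t in (0:ℝ)..1, t ^ (a + 1) * (1 - t) ^ b := by
        rw [ibp, ← intervalIntegral.integral_const_mul]
        simp only [sub_self, zero_pow (Nat.add_one_ne_zero _), zero_mul, zero_div, mul_zero,
          zero_sub, ← intervalIntegral.integral_neg]
        congr 1 with t
        ring
      _ = a ! * (b + 1)! / (a + (b + 1) + 1)! := by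
        rw [ih, show a + 1 + b + 1 = a + (b + 1) + 1 by ring]
        simp only [Nat.factorial_succ]
        push_cast
        field_simp

lemma bern_natCast {n k : ℕ} (hk : k ≤ n) (x : ℝ) :
    bern n k x = n.choose k * x ^ k * (1 - x) ^ (n - k) := by
  rw [bern, if_pos ⟨k.cast_nonneg, by exact_mod_cast hk⟩, Int.toNat_natCast]

lemma bern_eq_zero {n : ℕ} {k : ℤ} (hk : k < 0 ∨ n < k) (x : ℝ) : bern n k x = 0 :=
  if_neg (by omega)

@[fun_prop]
lemma continuous_bern (n : ℕ) (k : ℤ) : Continuous (bern n k) := by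
  unfold bern
  exact continuous_if_const _ (fun _ => by fun_prop) fun _ => continuous_const

lemma sum_bern (m : ℕ) (x : ℝ) : ∑ k ∈ range (m + 1), bern m k x = 1 := by
  have := (add_pow x (1 - x) m).symm
  rw [add_sub_cancel, one_pow] at this
  rw [← this]
  refine sum_congr rfl fun k hk => ?_
  rw [bern_natCast (mem_range_succ_iff.mp hk)]
  ring

lemma sum_bern_sub_mul {m s N : ℕ} (h : m + s < N) (x : ℝ) (g : ℕ → ℝ) :
    ∑ k ∈ range N, bern m (k - s) x * g k = ∑ k ∈ range (m + 1), bern m k x * g (k + s) := by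
  have hshift : ∑ k ∈ range (m + 1), bern m k x * g (k + s)
      = ∑ k ∈ Ico s (m + 1 + s), bern m (k - s) x * g k := by
    rw [sum_Ico_eq_sum_range, Nat.add_sub_cancel]
    refine sum_congr rfl fun k _ => ?_
    rw [add_comm s k, Nat.cast_add, add_sub_cancel_right]
  rw [hshift]
  refine (sum_subset (fun k hk => ?_) fun k hk hk' => ?_).symm
  · simp only [mem_Ico, mem_range] at hk ⊢
    omega
  · simp only [mem_Ico, mem_range, not_and_or, not_le, not_lt] at hk hk'
    rw [bern_eq_zero (by omega), zero_mul]

lemma descFactorial_mul_bern {m k : ℕ} (hk : k ≤ m) (i : ℕ) (x : ℝ) :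
    k.descFactorial i * bern m k x = m.descFactorial i * x ^ i * bern (m - i) (k - i) x := by
  rcases lt_or_ge k i with hki | hik
  · rw [Nat.descFactorial_of_lt hki, bern_eq_zero (k := k - i) (by omega)]
    simp
  · have hchoose : (k.descFactorial i * m.choose k : ℝ)
        = m.descFactorial i * (m - i).choose (k - i) := by
      rw [Nat.descFactorial_eq_factorial_mul_choose, Nat.descFactorial_eq_factorial_mul_choose]
      exact_mod_cast by rw [mul_assoc, mul_comm (k.choose i), Nat.choose_mul hik, mul_assoc]
    rw [← Nat.cast_sub hik, bern_natCast hk, bern_natCast (by omega),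
      show m - i - (k - i) = m - k by omega,
      show x ^ k = x ^ i * x ^ (k - i) by rw [← pow_add, Nat.add_sub_cancel' hik]]
    linear_combination x ^ i * x ^ (k - i) * (1 - x) ^ (m - k) * hchoose

lemma sum_bern_mul_descFactorial (m i : ℕ) (x : ℝ) :
    ∑ k ∈ range (m + 1), bern m k x * k.descFactorial i = m.descFactorial i * x ^ i := by
  calc ∑ k ∈ range (m + 1), bern m k x * k.descFactorial i
      = m.descFactorial i * x ^ i * ∑ k ∈ range (m + 1), bern (m - i) (k - i) x := by
        rw [mul_sum]
        refine sum_congr rfl fun k hk => ?_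
        rw [mul_comm, descFactorial_mul_bern (mem_range_succ_iff.mp hk)]
    _ = m.descFactorial i * x ^ i := by
        rcases le_or_gt i m with him | hmi
        · have := sum_bern_sub_mul (m := m - i) (s := i) (N := m + 1) (by omega) x 1
          simp only [Pi.one_apply, mul_one] at this
          rw [this, sum_bern, mul_one]
        · simp [Nat.descFactorial_of_lt hmi]

lemma Nat.add_descFactorial_eq_sum (a b i : ℕ) :
    (a + b).descFactorial i
      = ∑ l ∈ range (i + 1), i.choose l * a.descFactorial l * b.descFactorial (i - l) := by
  simp only [Nat.descFactorial_eq_factorial_mul_choose, Nat.add_choose_eq,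
    Nat.sum_antidiagonal_eq_sum_range_succ_mk, mul_sum]
  refine sum_congr rfl fun l hl => ?_
  rw [← Nat.choose_mul_factorial_mul_factorial (mem_range_succ_iff.mp hl)]
  ring

lemma sum_bern_mul_add_descFactorial (m c i : ℕ) (x : ℝ) :
    ∑ k ∈ range (m + 1), bern m k x * (k + c).descFactorial i
      = ∑ l ∈ range (i + 1), i.choose l * c.descFactorial (i - l) * m.descFactorial l * x ^ l := by
  simp only [Nat.add_descFactorial_eq_sum, Nat.cast_sum, Nat.cast_mul, mul_sum]
  rw [sum_comm]
  refine sum_congr rfl fun l _ => ?_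
  rw [mul_assoc _ (m.descFactorial l : ℝ), ← sum_bern_mul_descFactorial, mul_sum]
  exact sum_congr rfl fun k _ => by ring

lemma integral_bern_mul_pow {n k : ℕ} (hk : k ≤ n) (j : ℕ) :
    (n + 1) * ∫ t in (0:ℝ)..1, bern n k t * t ^ j
      = (k + 1).ascFactorial j / (n + 2).ascFactorial j := by
  have hbeta : ∫ t in (0:ℝ)..1, bern n k t * t ^ j
      = n.choose k * ((k + j)! * (n - k)! / (n + 1 + j)!) := by
    rw [show n + 1 + j = k + j + (n - k) + 1 by omega, ← integral_pow_mul_one_sub_pow,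
      ← intervalIntegral.integral_const_mul]
    refine intervalIntegral.integral_congr fun t _ => ?_
    simp only [bern_natCast hk]
    ring
  have hk_fact : ((k + j)! : ℝ) = k ! * (k + 1).ascFactorial j := by
    exact_mod_cast (Nat.factorial_mul_ascFactorial k j).symm
  have hn_fact : ((n + 1 + j)! : ℝ) = (n + 1)! * (n + 2).ascFactorial j := by
    exact_mod_cast (Nat.factorial_mul_ascFactorial (n + 1) j).symm
  have hchoose : (n.choose k * k ! * (n - k)! : ℝ) = n ! := by
    exact_mod_cast Nat.choose_mul_factorial_mul_factorial hk
  have hchoose_ne : (n.choose k : ℝ) ≠ 0 := by exact_mod_cast (Nat.choose_pos hk).ne'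
  rw [hbeta, hk_fact, hn_fact, Nat.factorial_succ, Nat.cast_mul, ← hchoose]
  push_cast
  field_simp

lemma sum_pM2_mul (m : ℕ) (x : ℝ) (g : ℕ → ℝ) :
    ∑ k ∈ range (m + 3), pM2 (m + 2) k x * g k
      = (m * x ^ 2 - (m + 2) * x + 3 / 2) * ∑ k ∈ range (m + 1), bern m k x * g k
        + 2 * m * x * (1 - x) * ∑ k ∈ range (m + 1), bern m k x * g (k + 1)
        + (m * x ^ 2 - (m - 2) * x - 1 / 2) * ∑ k ∈ range (m + 1), bern m k x * g (k + 2) := by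
  have h0 := sum_bern_sub_mul (m := m) (s := 0) (N := m + 3) (by omega) x g
  have h1 := sum_bern_sub_mul (m := m) (s := 1) (N := m + 3) (by omega) x g
  have h2 := sum_bern_sub_mul (m := m) (s := 2) (N := m + 3) (by omega) x g
  simp only [Nat.cast_zero, sub_zero, add_zero, Nat.cast_one, Nat.cast_ofNat] at h0 h1 h2
  rw [← h0, ← h1, ← h2, mul_sum, mul_sum, mul_sum, ← sum_add_distrib, ← sum_add_distrib]
  refine sum_congr rfl fun k _ => ?_
  simp only [pM2, Nat.add_sub_cancel]
  push_cast
  ring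

lemma DM2_pow (n j : ℕ) (x : ℝ) :
    DM2 n (fun t => t ^ j) x
      = (∑ k ∈ range (n + 1), pM2 n k x * (k + 1).ascFactorial j) / (n + 2).ascFactorial j := by
  rw [DM2, mul_sum, sum_div]
  refine sum_congr rfl fun k hk => ?_
  rw [mul_left_comm, integral_bern_mul_pow (mem_range_succ_iff.mp hk), mul_div_assoc]

lemma DM2_sub_pow (n r : ℕ) (x : ℝ) :
    DM2 n (fun t => (t - x) ^ r) x
      = ∑ j ∈ range (r + 1), (-x) ^ (r - j) * r.choose j * DM2 n (fun t => t ^ j) x := by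
  have hexpand (k : ℕ) : ∫ t in (0:ℝ)..1, bern n k t * (t - x) ^ r
      = ∑ j ∈ range (r + 1), (-x) ^ (r - j) * r.choose j * ∫ t in (0:ℝ)..1, bern n k t * t ^ j := by
    simp_rw [sub_eq_add_neg, add_pow, mul_sum]
    rw [intervalIntegral.integral_finsetSum fun j _ => Continuous.intervalIntegrable (by fun_prop) _ _]
    refine sum_congr rfl fun j _ => ?_
    rw [← intervalIntegral.integral_const_mul]
    exact intervalIntegral.integral_congr fun t _ => by ring
  simp only [DM2, hexpand, mul_sum]
  rw [sum_comm]
  exact sum_congr rfl fun j _ => sum_congr rfl fun k _ => by ring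

lemma DM2_add_two_pow (m j : ℕ) (x : ℝ) :
    DM2 (m + 2) (fun t => t ^ j) x
      = (∑ l ∈ range (j + 1), j.choose l * m.descFactorial l * x ^ l *
          ((m * x ^ 2 - (m + 2) * x + 3 / 2) * j.descFactorial (j - l)
            + 2 * m * x * (1 - x) * (1 + j).descFactorial (j - l)
            + (m * x ^ 2 - (m - 2) * x - 1 / 2) * (2 + j).descFactorial (j - l)))
        / (m + 4).ascFactorial j := by
  rw [DM2_pow, show m + 2 + 1 = m + 3 from rfl, sum_pM2_mul]
  congr 1
  simp only [← Nat.add_descFactorial_eq_ascFactorial]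
  simp only [add_assoc, sum_bern_mul_add_descFactorial, mul_sum, ← sum_add_distrib]
  exact sum_congr rfl fun l _ => by ring

theorem DM2_central_moments_general (n : ℕ) (hn : 4 ≤ n) (x : ℝ) :
    DM2 n (fun t => (t - x) ^ 2) x
      = 20 * x * (1 - x) / (((n : ℝ) + 2) * ((n : ℝ) + 3))
        - 3 / (((n : ℝ) + 2) * ((n : ℝ) + 3)) ∧
    DM2 n (fun t => (t - x) ^ 3) x
      = 3 * (1 - 2 * x) * (-(4 * (n : ℝ) * x * (1 - x)) - 48 * x ^ 2 + 48 * x - 7)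
          / (((n : ℝ) + 2) * ((n : ℝ) + 3) * ((n : ℝ) + 4)) := by
  obtain ⟨m, rfl⟩ : ∃ m, n = m + 2 := ⟨n - 2, by omega⟩
  -- Pochhammer evaluation expands `m.descFactorial l` in `ℝ`, avoiding truncated `m - 1`.
  simp only [DM2_sub_pow, DM2_add_two_pow, sum_range_succ, sum_range_zero,
    ← descPochhammer_eval_eq_descFactorial ℝ, descPochhammer_succ_eval, descPochhammer_zero,
    Nat.cast_ascFactorial ℝ, ascPochhammer_succ_eval, ascPochhammer_zero, Polynomial.eval_one]
  norm_num
  constructor <;> field_simp <;> ring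

theorem DM2_central_moments (n : ℕ) (hn : 4 ≤ n) (x : ℝ) (hx : x ∈ Set.Icc (0:ℝ) 1) :
    DM2 n (fun t => (t - x) ^ 2) x
      = 20 * x * (1 - x) / (((n : ℝ) + 2) * ((n : ℝ) + 3))
        - 3 / (((n : ℝ) + 2) * ((n : ℝ) + 3)) ∧
    DM2 n (fun t => (t - x) ^ 3) x
      = 3 * (1 - 2 * x) * (-(4 * (n : ℝ) * x * (1 - x)) - 48 * x ^ 2 + 48 * x - 7)
          / (((n : ℝ) + 2) * ((n : ℝ) + 3) * ((n : ℝ) + 4)) :=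
  DM2_central_moments_general n hn x
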